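/- arXiv:0907.2150 — 6 statements merged into one kernel-verified Lean document; each statement's English description precedes it below -/
import Mathlib

section
/- Let (Z̄_i)_{i∈ℤ} be an i.i.d. sequence taking value 1 with probability p ∈ (0,1) and ⋆ otherwise, let ℓ̄ : ℕ → ℕ be nondecreasing, and define m̄_i = inf{k ≥ 0 : Z̄_{i-k-1} = 1}, L̄_i = 0 if Z̄_i = 1 and L̄_i = m̄_i + 1 + ℓ̄(m̄_i) otherwise. Define the chain D^{(0)} by D^{(0)}_i = 0 for i ≤ 0 and D^{(0)}_i = max(i - i* - L̄_i, 0) for i ≥ 1, where i* = max{l < i : D^{(0)}_l = 0}. Let ζ be the first time i ≥ 1 with D^{(0)}_i = 0. Then for every integer M ≥ 1, P(ζ < ∞) ≤ p^M · sum_{i ≥ M-1} (1-p)^{ℓ̄⁻¹(i)} + (1 - p^M), where ℓ̄⁻¹(i) = inf{k ≥ 1 : ℓ̄(k) > i}. -/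
/-! On the event that `Z̄_1 = ⋯ = Z̄_M = 1` the chain climbs as `D_i = i` up to
time `M`, so a first return at time `ζ > M` forces `ζ ≤ L̄_ζ = m̄_ζ + 1 + ℓ̄(m̄_ζ)`. Writing
`j = ζ - m̄_ζ - 1 ≥ M` for the last `1` before `ζ`, this says `ℓ̄(m̄_ζ) ≥ j` and that
`Z̄_{j+1}, …, Z̄_ζ` are all stars; hence at least `ℓ̄⁻¹(j - 1)` stars follow time `j`.
A union bound over `j` and independence give the estimate. -/

open scoped Classical
open MeasureTheory ProbabilityTheory

/-- `b ^ (ℓ̄⁻¹ i)` where `ℓ̄⁻¹(i) = inf{k ≥ 1 : ℓ̄(k) > i}`, with the convention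
that the value is `0` when the set is empty (i.e. `ℓ̄⁻¹(i) = +∞`). -/
noncomputable def powInvBar (b : ℝ) (lbar : ℕ → ℕ) (i : ℕ) : ℝ :=
  if _h : ∃ k, 1 ≤ k ∧ i < lbar k then b ^ sInf {k | 1 ≤ k ∧ i < lbar k} else 0

section Chain

variable {D : ℕ → ℕ} {L : ℤ → ℕ}

lemma sSup_zeros_eq_zero (hD0 : D 0 = 0) {i : ℕ} (hi : 0 < i)
    (h : ∀ l, 0 < l → l < i → D l ≠ 0) : sSup {l | l < i ∧ D l = 0} = 0 := by
  have : {l | l < i ∧ D l = 0} = {0} := by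
    ext l
    simp only [Set.mem_ofPred_eq, Set.mem_singleton_iff]
    constructor
    · rintro ⟨hl, hDl⟩
      by_contra hne
      exact h l (Nat.pos_of_ne_zero hne) hl hDl
    · rintro rfl
      exact ⟨hi, hD0⟩
  rw [this, csSup_singleton]

variable (hD0 : D 0 = 0)
  (hDrec : ∀ i, 1 ≤ i → D i = i - sSup {l | l < i ∧ D l = 0} - L i)
include hD0 hDrec

lemma chain_eq_self_of_forall_L_eq_zero {M : ℕ} (hL : ∀ i : ℕ, 1 ≤ i → i ≤ M → L i = 0) :
    ∀ i, 1 ≤ i → i ≤ M → D i = i := by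
  intro i
  induction i using Nat.strong_induction_on with
  | _ i ih =>
    intro hi hiM
    have hlast : sSup {l | l < i ∧ D l = 0} = 0 :=
      sSup_zeros_eq_zero hD0 hi fun l hl hli => by
        rw [ih l hli hl (by omega)]
        omega
    rw [hDrec i hi, hlast, hL i hi hiM]
    rfl

lemma le_L_of_first_return {ζ : ℕ} (hζ : 1 ≤ ζ) (hDζ : D ζ = 0)
    (hfirst : ∀ l, 0 < l → l < ζ → D l ≠ 0) : ζ ≤ L ζ := by
  have := hDrec ζ hζ
  rw [sSup_zeros_eq_zero hD0 hζ hfirst, hDζ] at this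
  omega

end Chain

/- The infimum defining `m̄` is taken in `ℤ`, where `sInf` of a set that is not bounded below
is `0`; the two facts below hold in either case. -/
section IntInf

variable {S : Set ℤ} {m : ℕ}

lemma natCast_le_of_eq_sInf (hm : (m : ℤ) = sInf S) {a : ℤ} (ha : a ∈ S) (ha0 : 0 ≤ a) :
    (m : ℤ) ≤ a := by
  by_cases hS : BddBelow S
  · exact hm ▸ csInf_le hS ha
  · rwa [hm, Int.csInf_of_not_bddBelow hS]

lemma notMem_of_lt_of_eq_sInf (hm : (m : ℤ) = sInf S) {k : ℤ} (hk0 : 0 ≤ k) (hk : k < m) :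
    k ∉ S := by
  by_cases hS : BddBelow S
  · exact notMem_of_lt_csInf (hm ▸ hk) hS
  · rw [hm, Int.csInf_of_not_bddBelow hS] at hk
    omega

end IntInf

theorem exists_star_run_of_returns {Z : ℤ → Bool} {ℓ : ℕ → ℕ} {m L : ℤ → ℕ} {D : ℕ → ℕ}
    {M : ℕ} (hℓ : Monotone ℓ)
    (hm : ∀ i, (m i : ℤ) = sInf {k : ℤ | Z (i - k - 1) = true})
    (hL : ∀ i, L i = if Z i then 0 else m i + 1 + ℓ (m i))
    (hD0 : D 0 = 0) (hDrec : ∀ i, 1 ≤ i → D i = i - sSup {l | l < i ∧ D l = 0} - L i)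
    (hM : 1 ≤ M) (hA : ∀ t ∈ Finset.Icc (1 : ℤ) M, Z t = true)
    (hret : ∃ i, 1 ≤ i ∧ D i = 0) :
    ∃ i k, 1 ≤ k ∧ i + (M - 1) < ℓ k ∧
      ∀ t ∈ Finset.Ioc ((i + M : ℕ) : ℤ) ((i + M : ℕ) + k), Z t = false := by
  obtain ⟨ζ, ⟨hζ, hDζ⟩, hfirst⟩ : ∃ ζ, (1 ≤ ζ ∧ D ζ = 0) ∧ ∀ l, 0 < l → l < ζ → D l ≠ 0 :=
    ⟨_, Nat.find_spec hret, fun _ hl hlζ hDl => Nat.find_min hret hlζ ⟨hl, hDl⟩⟩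
  have hMζ : M < ζ := by
    by_contra! h
    have := chain_eq_self_of_forall_L_eq_zero hD0 hDrec
      (fun i hi hiM => by rw [hL, hA i (Finset.mem_Icc.2 ⟨by omega, by omega⟩)]; rfl) ζ hζ h
    omega
  have hζL := le_L_of_first_return hD0 hDrec hζ hDζ hfirst
  have hZζ : Z ζ = false := by
    by_contra h
    rw [hL, if_pos (Bool.not_eq_false _ ▸ h)] at hζL
    omega
  rw [hL, hZζ, if_neg Bool.false_ne_true] at hζL
  have hmζ : (m ζ : ℤ) ≤ ζ - M - 1 := by
    refine natCast_le_of_eq_sInf (hm ζ) ?_ (by omega)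
    show Z (ζ - (ζ - M - 1) - 1) = true
    convert hA M (Finset.mem_Icc.2 ⟨by omega, le_rfl⟩) using 2
    ring
  have hstars : ∀ k : ℤ, 0 ≤ k → k < m ζ → Z (ζ - k - 1) = false := fun k hk0 hk =>
    Bool.eq_false_iff.2 (notMem_of_lt_of_eq_sInf (hm ζ) hk0 hk)
  refine ⟨ζ - m ζ - 1 - M, max (m ζ) 1, le_max_right _ _, ?_, fun t ht => ?_⟩
  · have := hℓ (le_max_left (m ζ) 1)
    omega
  · rw [Finset.mem_Ioc] at ht
    rcases eq_or_lt_of_le (show t ≤ ζ by omega) with rfl | htζ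
    · exact hZζ
    · convert hstars (ζ - 1 - t) (by omega) (by omega) using 2
      ring

section Bernoulli

variable {ι Ω : Type*} [MeasurableSpace Ω] {P : Measure Ω} [IsProbabilityMeasure P]
  {Z : ι → Ω → Bool} {p : ℝ}

lemma measure_eq_false_of_measure_eq_true {t : ι} (hmeas : Measurable (Z t)) (hp : 0 ≤ p)
    (hlaw : P {ω | Z t ω = true} = ENNReal.ofReal p) :
    P {ω | Z t ω = false} = ENNReal.ofReal (1 - p) := by
  have hcompl : {ω | Z t ω = false} = {ω | Z t ω = true}ᶜ := by
    ext ω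
    simp
  rw [hcompl, measure_compl (measurableSet_eq_fun hmeas measurable_const) (measure_ne_top _ _),
    hlaw, measure_univ, ← ENNReal.ofReal_one, ← ENNReal.ofReal_sub _ hp]

lemma measure_forall_true_and_forall_false (hmeas : ∀ t, Measurable (Z t))
    (hiid : iIndepFun Z P) (hp : 0 ≤ p) (hlaw : ∀ t, P {ω | Z t ω = true} = ENNReal.ofReal p)
    {S T : Finset ι} (hST : Disjoint S T) :
    P {ω | (∀ t ∈ S, Z t ω = true) ∧ ∀ t ∈ T, Z t ω = false} =
      ENNReal.ofReal p ^ S.card * ENNReal.ofReal (1 - p) ^ T.card := by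
  have hset : {ω | (∀ t ∈ S, Z t ω = true) ∧ ∀ t ∈ T, Z t ω = false} =
      ⋂ t ∈ S ∪ T, Z t ⁻¹' {decide (t ∈ S)} := by
    ext ω
    simp only [Set.mem_ofPred_eq, Set.mem_iInter, Finset.mem_union, Set.mem_preimage,
      Set.mem_singleton_iff]
    refine ⟨fun h t ht => ?_, fun h => ⟨fun t ht => ?_, fun t ht => ?_⟩⟩
    · rcases ht with ht | ht
      · simpa [ht] using h.1 t ht
      · simpa [Finset.disjoint_right.1 hST ht] using h.2 t ht
    · simpa [ht] using h t (Or.inl ht)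
    · simpa [Finset.disjoint_right.1 hST ht] using h t (Or.inr ht)
  rw [hset, hiid.meas_biInter fun t _ => ⟨{_}, measurableSet_singleton _, rfl⟩,
    Finset.prod_union hST]
  congr 1
  · rw [Finset.prod_congr rfl fun t ht => by
      simp only [ht, decide_true]
      exact hlaw t, Finset.prod_const]
  · rw [Finset.prod_congr rfl fun t ht => by
      simp only [Finset.disjoint_right.1 hST ht, decide_false]
      exact measure_eq_false_of_measure_eq_true (hmeas t) hp (hlaw t), Finset.prod_const]

end Bernoulli

lemma measure_ones_and_star_run_le {Ω : Type*} [MeasurableSpace Ω] {P : Measure Ω}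
    [IsProbabilityMeasure P] {Z : ℤ → Ω → Bool} {p : ℝ} (hp : p ∈ Set.Icc (0 : ℝ) 1)
    (hmeas : ∀ t, Measurable (Z t)) (hiid : iIndepFun Z P)
    (hlaw : ∀ t, P {ω | Z t ω = true} = ENNReal.ofReal p)
    (ℓ : ℕ → ℕ) (c : ℕ) {M j : ℕ} (hMj : M ≤ j) :
    P {ω | (∀ t ∈ Finset.Icc (1 : ℤ) M, Z t ω = true) ∧
        ∃ k, 1 ≤ k ∧ c < ℓ k ∧ ∀ t ∈ Finset.Ioc (j : ℤ) (j + k), Z t ω = false} ≤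
      ENNReal.ofReal (p ^ M) * ENNReal.ofReal (powInvBar (1 - p) ℓ c) := by
  unfold powInvBar
  split_ifs with h
  · set n := sInf {k | 1 ≤ k ∧ c < ℓ k}
    have hdisj : Disjoint (Finset.Icc (1 : ℤ) M) (Finset.Ioc (j : ℤ) (j + n)) := by
      rw [Finset.disjoint_left]
      intro t ht ht'
      rw [Finset.mem_Icc] at ht
      rw [Finset.mem_Ioc] at ht'
      omega
    calc _ ≤ P {ω | (∀ t ∈ Finset.Icc (1 : ℤ) M, Z t ω = true) ∧
            ∀ t ∈ Finset.Ioc (j : ℤ) (j + n), Z t ω = false} := by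
          refine measure_mono fun ω ⟨hones, k, hk, hck, hstars⟩ => ⟨hones, fun t ht => ?_⟩
          have hnk : n ≤ k := Nat.sInf_le ⟨hk, hck⟩
          rw [Finset.mem_Ioc] at ht
          exact hstars t (Finset.mem_Ioc.2 ⟨ht.1, by omega⟩)
      _ = _ := by
          rw [measure_forall_true_and_forall_false hmeas hiid hp.1 hlaw hdisj, Int.card_Icc,
            Int.card_Ioc, ENNReal.ofReal_pow hp.1, ENNReal.ofReal_pow (by linarith [hp.2])]
          congr 2 <;> omega
  · refine le_of_eq_of_le (measure_mono_null (fun ω hω => ?_) measure_empty) zero_le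
    obtain ⟨-, k, hk, hck, -⟩ := hω
    exact h ⟨k, hk, hck⟩

/-- For the auxiliary chain `D⁽⁰⁾` driven by an i.i.d. `{1,⋆}` sequence `Z̄`
(`true` = `1`) with success probability `p`, the return probability to `0`
satisfies, for every `M ≥ 1`,
`P(ζ < ∞) ≤ p^M ∑_{i ≥ M-1} (1-p)^{ℓ̄⁻¹(i)} + (1 - p^M)`. -/
theorem stmt_3 {Ω : Type*} [MeasurableSpace Ω] (P : Measure Ω)
    [IsProbabilityMeasure P] (p : ℝ) (hp : p ∈ Set.Ioo (0 : ℝ) 1)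
    (Zbar : ℤ → Ω → Bool) (hmeas : ∀ i, Measurable (Zbar i))
    (hiid : iIndepFun Zbar P)
    (hlaw : ∀ i, P {ω | Zbar i ω = true} = ENNReal.ofReal p)
    (ℓbar : ℕ → ℕ) (hℓmono : Monotone ℓbar)
    (mbar : ℤ → Ω → ℕ)
    (hmbar : ∀ i ω, mbar i ω = sInf {k | Zbar (i - k - 1) ω = true})
    (Lbar : ℤ → Ω → ℕ)
    (hLbar : ∀ i ω, Lbar i ω =
      if Zbar i ω then 0 else mbar i ω + 1 + ℓbar (mbar i ω))
    (D : ℕ → Ω → ℕ) (hD0 : ∀ ω, D 0 ω = 0)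
    (hDrec : ∀ i ω, 1 ≤ i →
      D i ω = i - sSup {l | l < i ∧ D l ω = 0} - Lbar (i : ℤ) ω)
    (M : ℕ) (hM : 1 ≤ M) :
    P {ω | ∃ i, 1 ≤ i ∧ D i ω = 0} ≤
      ENNReal.ofReal (p ^ M) *
        (∑' i : ℕ, ENNReal.ofReal (powInvBar (1 - p) ℓbar (i + (M - 1)))) +
      ENNReal.ofReal (1 - p ^ M) := by
  have hp' : p ∈ Set.Icc (0 : ℝ) 1 := Set.Ioo_subset_Icc_self hp
  set A := {ω | ∀ t ∈ Finset.Icc (1 : ℤ) M, Zbar t ω = true}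
  set E : ℕ → Set Ω := fun i => {ω | (∀ t ∈ Finset.Icc (1 : ℤ) M, Zbar t ω = true) ∧
    ∃ k, 1 ≤ k ∧ i + (M - 1) < ℓbar k ∧
      ∀ t ∈ Finset.Ioc ((i + M : ℕ) : ℤ) ((i + M : ℕ) + k), Zbar t ω = false}
  have hcover : {ω | ∃ i, 1 ≤ i ∧ D i ω = 0} ⊆ (⋃ i, E i) ∪ Aᶜ := by
    intro ω hret
    by_cases hA : ω ∈ A
    · obtain ⟨i, hi⟩ := exists_star_run_of_returns hℓmono (hmbar · ω) (hLbar · ω) (hD0 ω)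
        (fun i => hDrec i ω) hM hA hret
      exact Or.inl (Set.mem_iUnion.2 ⟨i, hA, hi⟩)
    · exact Or.inr hA
  have hPA : P A = ENNReal.ofReal (p ^ M) := by
    have h := measure_forall_true_and_forall_false hmeas hiid hp'.1 hlaw
      (Finset.disjoint_empty_right (Finset.Icc (1 : ℤ) M))
    simp only [Finset.notMem_empty, IsEmpty.forall_iff, implies_true, and_true,
      Finset.card_empty, pow_zero, mul_one, Int.card_Icc, add_sub_cancel_right,
      Int.toNat_natCast] at h
    rw [h, ENNReal.ofReal_pow hp'.1]
  calc _ ≤ P (⋃ i, E i) + P Aᶜ := (measure_mono hcover).trans (measure_union_le _ _)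
    _ ≤ ∑' i, P (E i) + P Aᶜ := by gcongr; exact measure_iUnion_le _
    _ ≤ _ := by
      rw [measure_compl (by measurability) (measure_ne_top _ _), measure_univ, hPA,
        ← ENNReal.ofReal_one, ← ENNReal.ofReal_sub _ (pow_nonneg hp'.1 M),
        ← ENNReal.tsum_mul_left]
      gcongr with i
      exact measure_ones_and_star_run_le hp' hmeas hiid hlaw ℓbar _ (by omega)
end

section
/- With the setup of the auxiliary chain D^{(0)} driven by an i.i.d. {1,⋆}-valued sequence with P(Z̄_i = 1) = p, if sum_{i≥0} (1-p)^{ℓ̄⁻¹(i)} < ∞, then P(ζ < ∞) < 1, i.e. the state 0 is transient for D^{(0)}. -/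
/-
Fix `M` so large that `M ≥ ℓ̄(0) + 2` and `∑_{t ≥ M-1} (1-p)^{ℓ̄⁻¹(t)} < 1`, and let `C` be the
event that `Z̄ = 1` on `[1, M]`, of probability `p^M`. At the first return time `i` of `D⁽⁰⁾` we
have `i ≤ L̄_i`. On `C` this forces `Z̄_i = ⋆`, `i > M` and `m̄_i ≥ 1`, and the last `1` before `i`
sits at some `j ≥ M` with `j ≤ ℓ̄(m̄_i)`; so `Z̄` vanishes on `(j, j + ℓ̄⁻¹(j-1)]`. By independence
this pattern, jointly with `C`, has probability `p^M (1-p)^{ℓ̄⁻¹(j-1)}`, and a union bound gives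
`P(ζ < ∞) ≤ 1 - p^M + p^M ∑_{t ≥ M-1} (1-p)^{ℓ̄⁻¹(t)} < 1`.
-/

open scoped Classical
open MeasureTheory ProbabilityTheory

noncomputable def invBar (ℓ : ℕ → ℕ) (t : ℕ) : ℕ := sInf {k | 1 ≤ k ∧ t < ℓ k}

/-- The `1` that starts the run of `⋆`s sits at `t + 1`: the index of `ℓ̄⁻¹` is one less. -/
def IsGapAfter (ℓ : ℕ → ℕ) (z : ℤ → Bool) (t : ℕ) : Prop :=
  (∃ k, 1 ≤ k ∧ t < ℓ k) ∧ ∀ k ∈ Finset.Ioc (t + 1 : ℤ) (t + 1 + invBar ℓ t), z k = false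

lemma powInvBar_nonneg {b : ℝ} (hb : 0 ≤ b) (ℓ : ℕ → ℕ) (t : ℕ) : 0 ≤ powInvBar b ℓ t := by
  unfold powInvBar
  split_ifs
  exacts [pow_nonneg hb _, le_rfl]

lemma exists_le_of_return {d L : ℕ → ℕ}
    (hrec : ∀ i, 1 ≤ i → d i = i - sSup {l | l < i ∧ d l = 0} - L i)
    (hret : ∃ i, 1 ≤ i ∧ d i = 0) : ∃ i, 1 ≤ i ∧ i ≤ L i := by
  obtain ⟨hi, hdi⟩ := Nat.find_spec hret
  have hsup : sSup {l | l < Nat.find hret ∧ d l = 0} = 0 := by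
    refine Nat.eq_zero_of_le_zero (csSup_le' fun l ⟨hl, hdl⟩ => ?_)
    by_contra h
    exact Nat.find_min hret hl ⟨by omega, hdl⟩
  refine ⟨_, hi, ?_⟩
  have := hrec _ hi
  rw [hsup, hdi] at this
  omega

/-- On `ℤ`, `sInf` is `0` on sets that are empty or unbounded below. The `m̄` of the statement is
such an infimum in `ℤ`, so only a nonzero `m̄` is a genuine distance to the last `1`. -/
lemma Int.bddBelow_of_csInf_ne_zero {s : Set ℤ} (h : sInf s ≠ 0) : BddBelow s :=
  by_contra fun hb => h (Int.csInf_of_not_bddBelow hb)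

lemma eq_false_of_mem_Ioo_of_csInf_eq {z : ℤ → Bool} {i : ℤ} {m : ℕ}
    (hm : (m : ℤ) = sInf {k : ℤ | z (i - k - 1) = true}) (hm1 : 1 ≤ m) :
    ∀ k ∈ Finset.Ioo (i - m - 1) i, z k = false := by
  intro k hk
  set s := {k : ℤ | z (i - k - 1) = true}
  rw [Finset.mem_Ioo] at hk
  have : i - k - 1 ∉ s := notMem_of_lt_csInf (by omega) (Int.bddBelow_of_csInf_ne_zero (by omega))
  simpa [s, show i - (i - k - 1) - 1 = k by ring] using this

lemma exists_isGapAfter {ℓ : ℕ → ℕ} {z : ℤ → Bool} {M : ℕ} (hM : ℓ 0 + 2 ≤ M)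
    (hones : ∀ k ∈ Finset.Icc (1 : ℤ) M, z k = true) {i : ℕ} (hi : 1 ≤ i) {m : ℕ}
    (hm : (m : ℤ) = sInf {k : ℤ | z (i - k - 1) = true})
    (hiL : i ≤ if z i then 0 else m + 1 + ℓ m) :
    ∃ t, M - 1 ≤ t ∧ IsGapAfter ℓ z t := by
  have hzi : z i = false := by
    cases h : z i
    · rfl
    · simp only [h, if_true] at hiL; omega
  simp only [hzi, Bool.false_eq_true, if_false] at hiL
  have hMi : M < i := by
    by_contra h
    have := hones i (Finset.mem_Icc.mpr ⟨by omega, by omega⟩)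
    simp [hzi] at this
  have hm1 : 1 ≤ m := by
    by_contra h
    obtain rfl : m = 0 := by omega
    omega
  have hzeros := eq_false_of_mem_Ioo_of_csInf_eq hm hm1
  have hjM : (M : ℤ) ≤ i - m - 1 := by
    by_contra h
    have := hzeros M (Finset.mem_Ioo.mpr ⟨by omega, by omega⟩)
    simp [hones M (Finset.mem_Icc.mpr ⟨by omega, le_rfl⟩)] at this
  -- `t + 1 = i - m - 1` is the position of the last `1` before `i`.
  refine ⟨i - m - 2, by omega, ⟨m, hm1, by omega⟩, fun k hk => hzeros k ?_⟩
  have hK : invBar ℓ (i - m - 2) ≤ m := Nat.sInf_le ⟨hm1, by omega⟩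
  simp only [Finset.mem_Ioc, Finset.mem_Ioo] at hk ⊢
  omega

lemma ENNReal.sub_add_mul_lt_one {q x : ENNReal} (hq0 : q ≠ 0) (hq1 : q ≤ 1) (hx : x < 1) :
    1 - q + q * x < 1 :=
  calc 1 - q + q * x < 1 - q + q := by
        refine ENNReal.add_lt_add_left (by simp) ?_
        simpa using ENNReal.mul_lt_mul_right hq0 (ne_top_of_le_ne_top ENNReal.one_ne_top hq1) hx
    _ = 1 := tsub_add_cancel_of_le hq1

section Bernoulli

variable {Ω ι : Type*} [MeasurableSpace Ω] {P : Measure Ω} [IsProbabilityMeasure P]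
  {Z : ι → Ω → Bool} {p : ℝ}

lemma measure_eq_false (hmeas : ∀ i, Measurable (Z i))
    (hlaw : ∀ i, P {ω | Z i ω = true} = ENNReal.ofReal p) (hp : 0 ≤ p) (i : ι) :
    P {ω | Z i ω = false} = ENNReal.ofReal (1 - p) := by
  have hcompl : {ω | Z i ω = false} = {ω | Z i ω = true}ᶜ := by ext; simp
  have htrue : MeasurableSet {ω | Z i ω = true} := hmeas i (measurableSet_singleton true)
  rw [hcompl, measure_compl htrue (measure_ne_top _ _),
    measure_univ, hlaw, ENNReal.ofReal_sub 1 hp, ENNReal.ofReal_one]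

lemma measure_ones_zeros (hmeas : ∀ i, Measurable (Z i)) (hiid : iIndepFun Z P)
    (hlaw : ∀ i, P {ω | Z i ω = true} = ENNReal.ofReal p) (hp : 0 ≤ p)
    {A B : Finset ι} (hAB : Disjoint A B) :
    P {ω | (∀ k ∈ A, Z k ω = true) ∧ ∀ k ∈ B, Z k ω = false} =
      ENNReal.ofReal p ^ A.card * ENNReal.ofReal (1 - p) ^ B.card := by
  have hset : {ω | (∀ k ∈ A, Z k ω = true) ∧ ∀ k ∈ B, Z k ω = false} =
      ⋂ k ∈ A ∪ B, {ω | Z k ω = decide (k ∈ A)} := by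
    ext ω
    simp only [Set.mem_ofPred_eq, Set.mem_iInter, Finset.mem_union]
    constructor
    · rintro ⟨hA, hB⟩ k (hk | hk)
      · simpa [hk] using hA k hk
      · simpa [Finset.disjoint_right.mp hAB hk] using hB k hk
    · intro h
      exact ⟨fun k hk => by simpa [hk] using h k (.inl hk),
        fun k hk => by simpa [Finset.disjoint_right.mp hAB hk] using h k (.inr hk)⟩
  rw [hset, hiid.meas_biInter (s := fun k => {ω | Z k ω = decide (k ∈ A)})
    fun k _ => ⟨{decide (k ∈ A)}, trivial, rfl⟩, Finset.prod_union hAB]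
  congr 1
  · rw [Finset.prod_congr (g := fun _ => ENNReal.ofReal p) rfl fun k hk => by simp [hk, hlaw],
      Finset.prod_const]
  · rw [Finset.prod_congr (g := fun _ => ENNReal.ofReal (1 - p)) rfl fun k hk => by
      simp [Finset.disjoint_right.mp hAB hk, measure_eq_false hmeas hlaw hp], Finset.prod_const]

end Bernoulli

lemma measure_ones_isGapAfter {Ω : Type*} [MeasurableSpace Ω] {P : Measure Ω}
    [IsProbabilityMeasure P] {Z : ℤ → Ω → Bool} {p : ℝ} (hmeas : ∀ i, Measurable (Z i))
    (hiid : iIndepFun Z P) (hlaw : ∀ i, P {ω | Z i ω = true} = ENNReal.ofReal p)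
    (hp : p ∈ Set.Icc (0 : ℝ) 1)
    (ℓ : ℕ → ℕ) {M t : ℕ} (hMt : M ≤ t + 1) :
    P {ω | (∀ k ∈ Finset.Icc (1 : ℤ) M, Z k ω = true) ∧ IsGapAfter ℓ (Z · ω) t} =
      ENNReal.ofReal p ^ M * ENNReal.ofReal (powInvBar (1 - p) ℓ t) := by
  by_cases h : ∃ k, 1 ≤ k ∧ t < ℓ k
  · simp only [IsGapAfter, h, true_and]
    rw [measure_ones_zeros hmeas hiid hlaw hp.1, Int.card_Icc, Int.card_Ioc, powInvBar, dif_pos h,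
      ENNReal.ofReal_pow (by linarith [hp.2])]
    · simp [invBar]
    · rw [Finset.disjoint_left]
      intro k hk hk'
      simp only [Finset.mem_Icc, Finset.mem_Ioc] at hk hk'
      omega
  · simp [IsGapAfter, h, powInvBar]

lemma return_inter_subset_iUnion_isGapAfter {Ω : Type*} (Zbar : ℤ → Ω → Bool) (ℓbar : ℕ → ℕ)
    (mbar : ℤ → Ω → ℕ) (hmbar : ∀ i ω, mbar i ω = sInf {k | Zbar (i - k - 1) ω = true})
    (Lbar : ℤ → Ω → ℕ)
    (hLbar : ∀ i ω, Lbar i ω = if Zbar i ω then 0 else mbar i ω + 1 + ℓbar (mbar i ω))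
    (D : ℕ → Ω → ℕ)
    (hDrec : ∀ i ω, 1 ≤ i → D i ω = i - sSup {l | l < i ∧ D l ω = 0} - Lbar (i : ℤ) ω)
    {M : ℕ} (hM : ℓbar 0 + 2 ≤ M) :
    {ω | ∃ i, 1 ≤ i ∧ D i ω = 0} ∩ {ω | ∀ k ∈ Finset.Icc (1 : ℤ) M, Zbar k ω = true} ⊆
      ⋃ n : ℕ, {ω | (∀ k ∈ Finset.Icc (1 : ℤ) M, Zbar k ω = true) ∧
        IsGapAfter ℓbar (Zbar · ω) (n + (M - 1))} := by
  rintro ω ⟨hret, hones⟩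
  obtain ⟨i, hi, hiL⟩ := exists_le_of_return (d := (D · ω)) (hDrec · ω) hret
  rw [hLbar] at hiL
  obtain ⟨t, ht, hgap⟩ := exists_isGapAfter hM hones hi (hmbar i ω) hiL
  exact Set.mem_iUnion.mpr ⟨t - (M - 1), hones, by rwa [Nat.sub_add_cancel ht]⟩

lemma measure_return_le {Ω : Type*} [MeasurableSpace Ω] {P : Measure Ω} [IsProbabilityMeasure P]
    {p : ℝ} (hp : p ∈ Set.Icc (0 : ℝ) 1) {Zbar : ℤ → Ω → Bool} (hmeas : ∀ i, Measurable (Zbar i))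
    (hiid : iIndepFun Zbar P) (hlaw : ∀ i, P {ω | Zbar i ω = true} = ENNReal.ofReal p)
    (ℓbar : ℕ → ℕ) (mbar : ℤ → Ω → ℕ)
    (hmbar : ∀ i ω, mbar i ω = sInf {k | Zbar (i - k - 1) ω = true})
    (Lbar : ℤ → Ω → ℕ)
    (hLbar : ∀ i ω, Lbar i ω = if Zbar i ω then 0 else mbar i ω + 1 + ℓbar (mbar i ω))
    (D : ℕ → Ω → ℕ)
    (hDrec : ∀ i ω, 1 ≤ i → D i ω = i - sSup {l | l < i ∧ D l ω = 0} - Lbar (i : ℤ) ω)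
    (hsum : Summable (powInvBar (1 - p) ℓbar)) {M : ℕ} (hM : ℓbar 0 + 2 ≤ M) :
    P {ω | ∃ i, 1 ≤ i ∧ D i ω = 0} ≤ 1 - ENNReal.ofReal p ^ M +
      ENNReal.ofReal p ^ M * ENNReal.ofReal (∑' n, powInvBar (1 - p) ℓbar (n + (M - 1))) := by
  set R := {ω | ∃ i, 1 ≤ i ∧ D i ω = 0}
  set C := {ω | ∀ k ∈ Finset.Icc (1 : ℤ) M, Zbar k ω = true}
  have hC : P C = ENNReal.ofReal p ^ M := by
    simpa [C] using measure_ones_zeros hmeas hiid hlaw hp.1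
      (Finset.disjoint_empty_right (Finset.Icc (1 : ℤ) M))
  have hCmeas : MeasurableSet C := by
    simp only [C, Set.ofPred_forall]
    exact Finset.measurableSet_biInter _ fun k _ => hmeas k (measurableSet_singleton true)
  calc P R ≤ P (R ∩ C) + P (R \ C) := measure_le_inter_add_sdiff _ _ _
    _ ≤ ∑' n : ℕ, P {ω | ω ∈ C ∧ IsGapAfter ℓbar (Zbar · ω) (n + (M - 1))} + P Cᶜ :=
        add_le_add ((measure_mono (return_inter_subset_iUnion_isGapAfter Zbar ℓbar mbar hmbar
          Lbar hLbar D hDrec hM)).trans (measure_iUnion_le _)) (measure_mono fun ω h => h.2)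
    _ = _ := by
        rw [measure_compl hCmeas (measure_ne_top _ _), measure_univ, hC, add_comm,
          ENNReal.ofReal_tsum_of_nonneg (fun n => powInvBar_nonneg (by linarith [hp.2]) _ _)
            ((summable_nat_add_iff (M - 1)).mpr hsum), ← ENNReal.tsum_mul_left]
        congr 1
        exact tsum_congr fun n => measure_ones_isGapAfter hmeas hiid hlaw hp ℓbar (by omega)

theorem stmt_4_general {Ω : Type*} [MeasurableSpace Ω] (P : Measure Ω)
    [IsProbabilityMeasure P] (p : ℝ) (hp : p ∈ Set.Ioo (0 : ℝ) 1)
    (Zbar : ℤ → Ω → Bool) (hmeas : ∀ i, Measurable (Zbar i))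
    (hiid : iIndepFun Zbar P)
    (hlaw : ∀ i, P {ω | Zbar i ω = true} = ENNReal.ofReal p)
    (ℓbar : ℕ → ℕ)
    (mbar : ℤ → Ω → ℕ)
    (hmbar : ∀ i ω, mbar i ω = sInf {k | Zbar (i - k - 1) ω = true})
    (Lbar : ℤ → Ω → ℕ)
    (hLbar : ∀ i ω, Lbar i ω =
      if Zbar i ω then 0 else mbar i ω + 1 + ℓbar (mbar i ω))
    (D : ℕ → Ω → ℕ)
    (hDrec : ∀ i ω, 1 ≤ i →
      D i ω = i - sSup {l | l < i ∧ D l ω = 0} - Lbar (i : ℤ) ω)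
    (hsum : Summable (powInvBar (1 - p) ℓbar)) :
    P {ω | ∃ i, 1 ≤ i ∧ D i ω = 0} < 1 := by
  obtain ⟨hp0, hp1⟩ := hp
  obtain ⟨N, hN⟩ := Filter.eventually_atTop.mp <|
    (tendsto_sum_nat_add (powInvBar (1 - p) ℓbar)).eventually (gt_mem_nhds one_pos)
  set M := max (N + 1) (ℓbar 0 + 2)
  calc P {ω | ∃ i, 1 ≤ i ∧ D i ω = 0}
      ≤ 1 - ENNReal.ofReal p ^ M +
          ENNReal.ofReal p ^ M * ENNReal.ofReal (∑' n, powInvBar (1 - p) ℓbar (n + (M - 1))) :=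
        measure_return_le ⟨hp0.le, hp1.le⟩ hmeas hiid hlaw ℓbar mbar hmbar Lbar hLbar D hDrec
          hsum (le_max_right _ _)
    _ < 1 := ENNReal.sub_add_mul_lt_one (by simp [hp0])
        (pow_le_one₀ zero_le (ENNReal.ofReal_le_one.mpr hp1.le))
        (ENNReal.ofReal_lt_one.mpr (hN _ (by omega)))

/-- For the auxiliary chain `D⁽⁰⁾` driven by an i.i.d. `{1,⋆}` sequence `Z̄`
(`true` = `1`) with success probability `p`, if `∑_i (1-p)^{ℓ̄⁻¹(i)} < ∞`
then `P(ζ < ∞) < 1`, i.e. the state `0` is transient. -/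
theorem stmt_4 {Ω : Type*} [MeasurableSpace Ω] (P : Measure Ω)
    [IsProbabilityMeasure P] (p : ℝ) (hp : p ∈ Set.Ioo (0 : ℝ) 1)
    (Zbar : ℤ → Ω → Bool) (hmeas : ∀ i, Measurable (Zbar i))
    (hiid : iIndepFun Zbar P)
    (hlaw : ∀ i, P {ω | Zbar i ω = true} = ENNReal.ofReal p)
    (ℓbar : ℕ → ℕ) (hℓmono : Monotone ℓbar)
    (mbar : ℤ → Ω → ℕ)
    (hmbar : ∀ i ω, mbar i ω = sInf {k | Zbar (i - k - 1) ω = true})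
    (Lbar : ℤ → Ω → ℕ)
    (hLbar : ∀ i ω, Lbar i ω =
      if Zbar i ω then 0 else mbar i ω + 1 + ℓbar (mbar i ω))
    (D : ℕ → Ω → ℕ) (hD0 : ∀ ω, D 0 ω = 0)
    (hDrec : ∀ i ω, 1 ≤ i →
      D i ω = i - sSup {l | l < i ∧ D l ω = 0} - Lbar (i : ℤ) ω)
    (hsum : Summable (powInvBar (1 - p) ℓbar)) :
    P {ω | ∃ i, 1 ≤ i ∧ D i ω = 0} < 1 :=
  stmt_4_general P p hp Zbar hmeas hiid hlaw ℓbar mbar hmbar Lbar hLbar D hDrec hsum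
end

section
/- For the family of chains (D^{(n)})_{n∈ℤ} defined by D^{(n)}_i = 0 for i ≤ n and D^{(n)}_i = max(i - i^{(n)} - L̄_i, 0) for i ≥ n+1 (with i^{(n)} the last time l < i at which D^{(n)}_l = 0), driven by a common sequence (L̄_i): for any integers n₁ ≤ n₂ and all i, D^{(n₁)}_i ≥ D^{(n₂)}_i (monotonicity), and moreover if D^{(n)}_i = 0 for some n ≤ m ≤ i, then D^{(n)}_k = D^{(m)}_k for all k ≥ i (coalescence). -/
/-- Monotonicity and coalescence of the family of auxiliary chains `D⁽ⁿ⁾`,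
all driven by a common sequence `(L̄_i)`: `D⁽ⁿ⁾_i = 0` for `i ≤ n` and
`D⁽ⁿ⁾_i = max(i - i⁽ⁿ⁾ - L̄_i, 0)` for `i ≥ n+1`, where
`i⁽ⁿ⁾ = max{l < i : D⁽ⁿ⁾_l = 0}`. Then `n₁ ≤ n₂ → D⁽ⁿ¹⁾_i ≥ D⁽ⁿ²⁾_i`, and if
`D⁽ⁿ⁾_i = 0` for some `n ≤ m ≤ i`, then `D⁽ⁿ⁾_k = D⁽ᵐ⁾_k` for all `k ≥ i`. -/
theorem stmt_5 (Lbar : ℤ → ℕ) (D : ℤ → ℤ → ℕ)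
    (hD0 : ∀ n i, i ≤ n → D n i = 0)
    (hDrec : ∀ n i, n < i →
      D n i = (i - sSup {l : ℤ | l < i ∧ D n l = 0} - (Lbar i : ℤ)).toNat) :
    (∀ n₁ n₂ i : ℤ, n₁ ≤ n₂ → D n₂ i ≤ D n₁ i) ∧
    (∀ n m i : ℤ, n ≤ m → m ≤ i → D n i = 0 → ∀ k : ℤ, i ≤ k → D n k = D m k) := by
  have hbdd : ∀ n i : ℤ, BddAbove {l : ℤ | l < i ∧ D n l = 0} := by
    intro n i
    exact ⟨i, fun l hl => le_of_lt hl.1⟩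
  have hne : ∀ n i : ℤ, n < i → ({l : ℤ | l < i ∧ D n l = 0}).Nonempty := by
    intro n i hni
    exact ⟨n, hni, hD0 n n le_rfl⟩
  have mono : ∀ n₁ n₂ : ℤ, n₁ ≤ n₂ → ∀ i : ℤ, D n₂ i ≤ D n₁ i := by
    intro n₁ n₂ h12
    have key : ∀ k : ℤ, n₂ ≤ k → ∀ l : ℤ, l ≤ k → D n₂ l ≤ D n₁ l := by
      refine Int.le_induction ?_ ?_
      · intro l hl
        rw [hD0 n₂ l hl]
        exact Nat.zero_le _
      · intro k hk IH l hl
        rcases lt_or_ge k l with h | h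
        · have hl' : l = k + 1 := le_antisymm hl h
          subst hl'
          rcases le_or_gt (k+1) n₂ with h2 | h2
          · rw [hD0 n₂ _ h2]; exact Nat.zero_le _
          · have h1 : n₁ < k + 1 := lt_of_le_of_lt h12 h2
            rw [hDrec n₂ _ h2, hDrec n₁ _ h1]
            have hsub : {l : ℤ | l < k + 1 ∧ D n₁ l = 0} ⊆ {l : ℤ | l < k + 1 ∧ D n₂ l = 0} := by
              intro p hp
              have hp1 : p < k + 1 := hp.1
              have hp2 : D n₁ p = 0 := hp.2
              have h3 := IH p (by omega)
              exact ⟨hp1, by omega⟩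
            have hle : sSup {l : ℤ | l < k + 1 ∧ D n₁ l = 0} ≤
                sSup {l : ℤ | l < k + 1 ∧ D n₂ l = 0} :=
              csSup_le_csSup (hbdd n₂ (k+1)) (hne n₁ (k+1) h1) hsub
            exact Int.toNat_le_toNat (by omega)
        · exact IH l h
    intro i
    rcases le_or_gt i n₂ with h | h
    · rw [hD0 n₂ i h]; exact Nat.zero_le _
    · exact key i (le_of_lt h) i le_rfl
  refine ⟨fun n₁ n₂ i h => mono n₁ n₂ h i, ?_⟩
  intro n m i hnm hmi h0
  have hmi0 : D m i = 0 := Nat.le_zero.mp (h0 ▸ mono n m hnm i)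
  have key : ∀ k : ℤ, i ≤ k → ∀ l : ℤ, i ≤ l → l ≤ k → D n l = D m l := by
    refine Int.le_induction ?_ ?_
    · intro l h1 h2
      have : l = i := le_antisymm h2 h1
      subst this
      rw [h0, hmi0]
    · intro k hk IH l h1 h2
      rcases lt_or_ge k l with h | h
      · have hl' : l = k + 1 := le_antisymm h2 h
        subst hl'
        have hil : i < k + 1 := by omega
        have hnl : n < k + 1 := by omega
        have hml : m < k + 1 := by omega
        have hiSn : i ∈ {l : ℤ | l < k + 1 ∧ D n l = 0} := ⟨hil, h0⟩
        have hiSm : i ∈ {l : ℤ | l < k + 1 ∧ D m l = 0} := ⟨hil, hmi0⟩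
        have hssup : sSup {l : ℤ | l < k + 1 ∧ D n l = 0} =
            sSup {l : ℤ | l < k + 1 ∧ D m l = 0} := by
          apply le_antisymm
          · have hmem := Int.csSup_mem (hne n (k+1) hnl) (hbdd n (k+1))
            have hge : i ≤ sSup {l : ℤ | l < k + 1 ∧ D n l = 0} :=
              le_csSup (hbdd n (k+1)) hiSn
            have hm1 := hmem.1
            apply le_csSup (hbdd m (k+1))
            exact ⟨hm1, by rw [← IH _ hge (by omega)]; exact hmem.2⟩
          · have hmem := Int.csSup_mem (hne m (k+1) hml) (hbdd m (k+1))
            have hge : i ≤ sSup {l : ℤ | l < k + 1 ∧ D m l = 0} :=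
              le_csSup (hbdd m (k+1)) hiSm
            have hm1 := hmem.1
            apply le_csSup (hbdd n (k+1))
            exact ⟨hm1, by rw [IH _ hge (by omega)]; exact hmem.2⟩
        rw [hDrec n _ hnl, hDrec m _ hml, hssup]
      · exact IH l h1 h
  intro k hk
  exact key k hk k hk le_rfl
end

section
/- Let (L̄_i)_{i∈ℤ} be a sequence of nonnegative integers and for n ≥ 0, l ≥ 0 define θ̄[0,n] = max{j ≤ 0 : L̄_i ≤ i - j for all i = j, ..., n}. Then the event {θ̄[0,n] < -l} equals the union over k = 0, ..., n of the events {D^{(-l-1)}_k = 0}, where D^{(-l-1)} is the auxiliary chain started at -l-1 from the same sequence (L̄_i). -/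
/-- Identity `{θ̄[0,n] < -l} = ∪_{k=0}^n {D⁽⁻ˡ⁻¹⁾_k = 0}`, in deterministic form:
`θ̄[0,n] = max{j ≤ 0 : L̄_i ≤ i - j for i = j,…,n}` is `< -l` iff no `j ∈ [-l,0]`
satisfies the constraints, and `D⁽ⁿ⁾` is the auxiliary chain started at `n`,
driven by the same sequence `(L̄_i)`. -/
theorem stmt_6 (Lbar : ℤ → ℕ) (D : ℤ → ℤ → ℕ)
    (hD0 : ∀ n i, i ≤ n → D n i = 0)
    (hDrec : ∀ n i, n < i →
      D n i = (i - sSup {l : ℤ | l < i ∧ D n l = 0} - (Lbar i : ℤ)).toNat)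
    (n l : ℕ) :
    (∀ j : ℤ, -(l : ℤ) ≤ j → j ≤ 0 →
        ¬ (∀ i : ℤ, j ≤ i → i ≤ n → (Lbar i : ℤ) ≤ i - j)) ↔
      ∃ k : ℤ, 0 ≤ k ∧ k ≤ n ∧ D (-(l : ℤ) - 1) k = 0 := by
  set m : ℤ := -(l : ℤ) - 1 with hm
  have hm0 : m < 0 := by simp [hm]; omega
  have key : ∀ i p : ℤ, m < i → D m p = 0 → p < i →
      (∀ q, q < i → D m q = 0 → q ≤ p) → (D m i = 0 ↔ i - (Lbar i : ℤ) ≤ p) := by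
    intro i p hmi hp hpi hub
    have hS : sSup {l : ℤ | l < i ∧ D m l = 0} = p := by
      apply le_antisymm
      · exact csSup_le ⟨p, hpi, hp⟩ (fun q hq => hub q hq.1 hq.2)
      · exact le_csSup ⟨p, fun q hq => hub q hq.1 hq.2⟩ ⟨hpi, hp⟩
    rw [hDrec m i hmi, hS, Int.toNat_eq_zero]
    omega
  constructor
  · intro h
    by_contra hno
    push_neg at hno
    obtain ⟨p, ⟨hpn, hpz⟩, hpmax⟩ :=
      Int.exists_greatest_of_bdd (P := fun p => p ≤ (n : ℤ) ∧ D m p = 0)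
        ⟨n, fun z hz => hz.1⟩ ⟨m, by omega, hD0 m m le_rfl⟩
    have hmp : m ≤ p := hpmax m ⟨by omega, hD0 m m le_rfl⟩
    have hp0 : p < 0 := by
      by_contra hc
      push_neg at hc
      exact hno p hc hpn hpz
    refine h (p + 1) (by omega) (by omega) ?_
    intro i hji hin
    by_contra hc
    push_neg at hc
    have hzi : D m i = 0 := by
      refine (key i p (by omega) hpz (by omega)
        (fun q hq hqz => hpmax q ⟨by omega, hqz⟩)).mpr (by omega)
    have := hpmax i ⟨hin, hzi⟩
    omega
  · rintro ⟨k, hk0, hkn, hkz⟩ j hjl hj0 hall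
    obtain ⟨i, ⟨hji, hiz, hik⟩, hmin⟩ :=
      Int.exists_least_of_bdd (P := fun i => j ≤ i ∧ D m i = 0 ∧ i ≤ k)
        ⟨j, fun z hz => hz.1⟩ ⟨k, by omega, hkz, le_rfl⟩
    obtain ⟨p, ⟨hpi, hpz⟩, hpmax⟩ :=
      Int.exists_greatest_of_bdd (P := fun q => q < i ∧ D m q = 0)
        ⟨i, fun z hz => le_of_lt hz.1⟩ ⟨m, by omega, hD0 m m le_rfl⟩
    have hpj : p < j := by
      by_contra hc
      push_neg at hc
      have := hmin p ⟨hc, hpz, by omega⟩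
      omega
    have hz := (key i p (by omega) hpz hpi (fun q hq hqz => hpmax q ⟨hq, hqz⟩)).mp hiz
    have := hall i hji (by omega)
    omega
end

section
/- With θ̄[0,n] and the chains D^{(n)} as above, driven by an i.i.d. translation-invariant sequence: for any l ≥ 0 and n ≥ 0, P(θ̄[0,n] < -l) ≤ sum_{k=l+1}^{l+n+1} P(D^{(0)}_k = 0). -/
open MeasureTheory

/-!
On the event `θ̄[0,n] < -l`, let `τ` be the last zero at or before `n` of the chain `D` started
at `m = -l-1`. If `τ < 0`, the failure of `j = τ + 1` as a regeneration time gives some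
`i ∈ (τ, n]` with `L̄_i ≥ i - τ`; since `τ` is also the last zero before `i`, the recursion forces
`D_i = 0`, contradicting the choice of `τ`. Hence `D` returns to `0` at some time in `[0, n]`.
The time elapsed since the last zero is a Markov chain driven by `L̄`, so `{D_{m+k} = 0}` is a
measurable event of the shifted sequence `(L̄_{m+i})_i`, and translation invariance turns
`P(D⁽ᵐ⁾_{m+k} = 0)` into `P(D⁽⁰⁾_k = 0)`; a union bound concludes.
-/

/-- The time elapsed at `n + k` since the last zero of the chain started at `n` driven by `f`;
unlike the chain, it is defined by a recursion that reads only `f (n + k + 1)`. -/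
def renewalAge (f : ℤ → ℕ) (n : ℤ) : ℕ → ℕ
  | 0 => 0
  | k + 1 => if renewalAge f n k + 1 ≤ f (n + (k + 1 : ℕ)) then 0 else renewalAge f n k + 1

/-- `d` is the chain `D⁽ⁿ⁾` driven by `f = L̄`. -/
structure IsRenewalChain (f d : ℤ → ℕ) (n : ℤ) : Prop where
  eq_zero_of_le : ∀ i ≤ n, d i = 0
  eq_of_lt : ∀ i, n < i → d i = (i - sSup {z | z < i ∧ d z = 0} - f i).toNat

namespace IsRenewalChain

variable {f d : ℤ → ℕ} {n : ℤ}

theorem isGreatest_zero_renewalAge (h : IsRenewalChain f d n) (k : ℕ) :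
    IsGreatest {z | z ≤ n + k ∧ d z = 0} (n + k - renewalAge f n k) := by
  induction k with
  | zero =>
    simp only [renewalAge, Nat.cast_zero, add_zero, sub_zero]
    exact ⟨⟨le_rfl, h.eq_zero_of_le n le_rfl⟩, fun z hz => hz.1⟩
  | succ k ih =>
    have hsup : sSup {z | z < n + (k + 1 : ℕ) ∧ d z = 0} = n + k - renewalAge f n k := by
      have hset : {z | z < n + (k + 1 : ℕ) ∧ d z = 0} = {z | z ≤ n + k ∧ d z = 0} := by
        simp only [Nat.cast_succ, Int.lt_add_one_iff, ← add_assoc]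
      rw [hset, ih.csSup_eq]
    have hd := h.eq_of_lt (n + (k + 1 : ℕ)) (by omega)
    rw [hsup] at hd
    by_cases hret : renewalAge f n k + 1 ≤ f (n + (k + 1 : ℕ))
    · rw [renewalAge, if_pos hret, Nat.cast_zero, sub_zero]
      exact ⟨⟨le_rfl, by rw [hd]; omega⟩, fun z hz => hz.1⟩
    · rw [renewalAge, if_neg hret]
      have hne : d (n + (k + 1 : ℕ)) ≠ 0 := by rw [hd]; omega
      refine ⟨⟨by push_cast; linarith [ih.1.1], ?_⟩, fun z hz => ?_⟩
      · convert ih.1.2 using 2; push_cast; ring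
      · obtain ⟨hzN, hz0⟩ := hz
        have hz' : z ≠ n + (k + 1 : ℕ) := by rintro rfl; exact hne hz0
        have := ih.2 ⟨by push_cast at hzN hz' ⊢; omega, hz0⟩
        push_cast at this ⊢; omega

theorem eq_zero_iff_renewalAge_eq_zero (h : IsRenewalChain f d n) (k : ℕ) :
    d (n + k) = 0 ↔ renewalAge f n k = 0 := by
  have hg := h.isGreatest_zero_renewalAge k
  constructor
  · intro hd; have := hg.2 ⟨le_rfl, hd⟩; omega
  · intro ha; simpa [ha] using hg.1.2

theorem lt_of_isGreatest_zero {N τ i : ℤ} (h : IsRenewalChain f d n)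
    (hτ : IsGreatest {z | z ≤ N ∧ d z = 0} τ) (hτi : τ < i) (hiN : i ≤ N) :
    (f i : ℤ) < i - τ := by
  have hsup : sSup {z | z < i ∧ d z = 0} = τ :=
    IsGreatest.csSup_eq ⟨⟨hτi, hτ.1.2⟩, fun z hz => hτ.2 ⟨by linarith [hz.1], hz.2⟩⟩
  have hni : n < i := by
    by_contra! hin
    exact absurd (hτ.2 ⟨hiN, h.eq_zero_of_le i hin⟩) (not_le.mpr hτi)
  have hd := h.eq_of_lt i hni
  rw [hsup] at hd
  by_contra hle
  exact absurd (hτ.2 ⟨hiN, by rw [hd]; omega⟩) (not_le.mpr hτi)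

theorem exists_zero_of_no_regeneration {N : ℤ} (h : IsRenewalChain f d n) (hn : n ≤ 0)
    (hN : 0 ≤ N)
    (hθ : ∀ j, n < j → j ≤ 0 → ∃ i, j ≤ i ∧ i ≤ N ∧ i - j < (f i : ℤ)) :
    ∃ i, 0 ≤ i ∧ i ≤ N ∧ d i = 0 := by
  have hτ := h.isGreatest_zero_renewalAge (N - n).toNat
  rw [show n + (N - n).toNat = N by omega] at hτ
  set τ := N - (renewalAge f n (N - n).toNat : ℤ)
  by_cases hτ0 : 0 ≤ τ
  · exact ⟨τ, hτ0, hτ.1.1, hτ.1.2⟩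
  obtain ⟨i, hji, hiN, hfi⟩ :=
    hθ (τ + 1) (by linarith [hτ.2 ⟨by omega, h.eq_zero_of_le n le_rfl⟩]) (by omega)
  have := h.lt_of_isGreatest_zero hτ (by omega) hiN
  omega

end IsRenewalChain

theorem renewalAge_comp_add_right (f : ℤ → ℕ) (s n : ℤ) (k : ℕ) :
    renewalAge (fun i => f (i + s)) n k = renewalAge f (n + s) k := by
  induction k with
  | zero => rfl
  | succ k ih => simp only [renewalAge, ih, add_right_comm n s]

theorem measurable_renewalAge (n : ℤ) (k : ℕ) :
    Measurable fun f : ℤ → ℕ => renewalAge f n k := by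
  induction k with
  | zero => exact measurable_const
  | succ k ih =>
    have hstep : Measurable fun p : ℕ × ℕ => if p.1 + 1 ≤ p.2 then 0 else p.1 + 1 :=
      measurable_of_countable _
    exact hstep.comp (ih.prodMk (measurable_pi_apply _))

theorem measure_shift_mem_eq {Ω : Type*} [MeasurableSpace Ω] (P : Measure Ω)
    (X : ℤ → Ω → ℕ) (hX : ∀ i, Measurable (X i))
    (hshift : ∀ s : ℤ,
      Measure.map (fun ω => (fun i : ℤ => X (i + s) ω)) P =
        Measure.map (fun ω => (fun i : ℤ => X i ω)) P)
    (s : ℤ) {A : Set (ℤ → ℕ)} (hA : MeasurableSet A) :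
    P {ω | (fun i => X (i + s) ω) ∈ A} = P {ω | (fun i => X i ω) ∈ A} := by
  have hmeas (s : ℤ) : Measurable fun ω => (fun i : ℤ => X (i + s) ω) :=
    measurable_pi_lambda _ fun i => hX _
  have := congrArg (· A) (hshift s)
  rw [Measure.map_apply (hmeas s) hA, Measure.map_apply (by simpa using hmeas 0) hA] at this
  exact this

theorem measure_renewalChain_eq_zero_shift {Ω : Type*} [MeasurableSpace Ω] (P : Measure Ω)
    (L : ℤ → Ω → ℕ) (hL : ∀ i, Measurable (L i))
    (hshift : ∀ s : ℤ,
      Measure.map (fun ω => (fun i : ℤ => L (i + s) ω)) P =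
        Measure.map (fun ω => (fun i : ℤ => L i ω)) P)
    (D : ℤ → ℤ → Ω → ℕ) (hD : ∀ m ω, IsRenewalChain (L · ω) (D m · ω) m)
    (m : ℤ) (k : ℕ) :
    P {ω | D m (m + k) ω = 0} = P {ω | D 0 k ω = 0} := by
  have hage (m' : ℤ) : {ω | D m' (m' + k) ω = 0} =
      {ω | (fun i => L (i + m') ω) ∈ {f | renewalAge f 0 k = 0}} := by
    ext ω
    simp only [Set.mem_ofPred_eq, (hD m' ω).eq_zero_iff_renewalAge_eq_zero,
      renewalAge_comp_add_right (L · ω), zero_add]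
  have hA : MeasurableSet {f : ℤ → ℕ | renewalAge f 0 k = 0} :=
    measurable_renewalAge 0 k (measurableSet_singleton 0)
  rw [hage m, measure_shift_mem_eq P L hL hshift m hA, ← measure_shift_mem_eq P L hL hshift 0 hA,
    ← hage 0, zero_add]

theorem stmt_7_general {Ω : Type*} [MeasurableSpace Ω] (P : Measure Ω)
    (Lbar : ℤ → Ω → ℕ) (hmeas : ∀ i, Measurable (Lbar i))
    (hshift : ∀ s : ℤ,
      Measure.map (fun ω => (fun i : ℤ => Lbar (i + s) ω)) P =
        Measure.map (fun ω => (fun i : ℤ => Lbar i ω)) P)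
    (D : ℤ → ℤ → Ω → ℕ)
    (hD0 : ∀ n i ω, i ≤ n → D n i ω = 0)
    (hDrec : ∀ n i ω, n < i →
      D n i ω = (i - sSup {l : ℤ | l < i ∧ D n l ω = 0} - (Lbar i ω : ℤ)).toNat)
    (n l : ℕ) :
    P {ω | ∀ j : ℤ, -(l : ℤ) ≤ j → j ≤ 0 →
        ¬ (∀ i : ℤ, j ≤ i → i ≤ n → (Lbar i ω : ℤ) ≤ i - j)} ≤
      ∑ k ∈ Finset.Icc (l + 1) (l + n + 1), P {ω | D 0 (k : ℤ) ω = 0} := by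
  have hchain (m : ℤ) (ω : Ω) : IsRenewalChain (Lbar · ω) (D m · ω) m :=
    ⟨fun i => hD0 m i ω, fun i => hDrec m i ω⟩
  set m : ℤ := -(l : ℤ) - 1
  have hsub : {ω | ∀ j : ℤ, -(l : ℤ) ≤ j → j ≤ 0 →
      ¬ (∀ i : ℤ, j ≤ i → i ≤ n → (Lbar i ω : ℤ) ≤ i - j)} ⊆
      ⋃ k ∈ Finset.range (n + 1), {ω | D m k ω = 0} := by
    intro ω hω
    obtain ⟨i, hi0, hin, hi⟩ := (hchain m ω).exists_zero_of_no_regeneration (N := n)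
      (by omega) (by positivity) fun j hj hj0 => by
        simpa using hω j (by omega) hj0
    simp only [Set.mem_iUnion, Finset.mem_range]
    exact ⟨i.toNat, by omega, by rwa [Int.toNat_of_nonneg hi0]⟩
  calc _ ≤ P (⋃ k ∈ Finset.range (n + 1), {ω | D m k ω = 0}) := measure_mono hsub
    _ ≤ ∑ k ∈ Finset.range (n + 1), P {ω | D m k ω = 0} := measure_biUnion_finset_le _ _
    _ = _ := by
      rw [← Finset.Ico_add_one_right_eq_Icc, Finset.sum_Ico_eq_sum_range,
        show l + n + 1 + 1 - (l + 1) = n + 1 by omega]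
      refine Finset.sum_congr rfl fun k _ => ?_
      rw [← measure_renewalChain_eq_zero_shift P Lbar hmeas hshift D hchain m,
        show m + ((l + 1 + k : ℕ) : ℤ) = k by push_cast; omega]

/-- Lemma `seqgeq1`: for the regeneration time
`θ̄[0,n] = max{j ≤ 0 : L̄_i ≤ i - j, i = j,…,n}` defined from a translation
invariant driving sequence `(L̄_i)`, and the auxiliary chains `D⁽ⁿ⁾` defined
from the same sequence, `P(θ̄[0,n] < -l) ≤ ∑_{k=l+1}^{l+n+1} P(D⁽⁰⁾_k = 0)`. -/
theorem stmt_7 {Ω : Type*} [MeasurableSpace Ω] (P : Measure Ω)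
    [IsProbabilityMeasure P]
    (Lbar : ℤ → Ω → ℕ) (hmeas : ∀ i, Measurable (Lbar i))
    (hshift : ∀ s : ℤ,
      Measure.map (fun ω => (fun i : ℤ => Lbar (i + s) ω)) P =
        Measure.map (fun ω => (fun i : ℤ => Lbar i ω)) P)
    (D : ℤ → ℤ → Ω → ℕ)
    (hD0 : ∀ n i ω, i ≤ n → D n i ω = 0)
    (hDrec : ∀ n i ω, n < i →
      D n i ω = (i - sSup {l : ℤ | l < i ∧ D n l ω = 0} - (Lbar i ω : ℤ)).toNat)
    (n l : ℕ) :
    P {ω | ∀ j : ℤ, -(l : ℤ) ≤ j → j ≤ 0 →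
        ¬ (∀ i : ℤ, j ≤ i → i ≤ n → (Lbar i ω : ℤ) ≤ i - j)} ≤
      ∑ k ∈ Finset.Icc (l + 1) (l + n + 1), P {ω | D 0 (k : ℤ) ω = 0} :=
  stmt_7_general P Lbar hmeas hshift D hD0 hDrec n l
end

section
/- Let (L_j)_{j∈ℤ} and (L̄_i)_{i∈ℤ} be sequences of nonnegative integers such that for every i and every j ∈ {(i-1)|w|+1, ..., i|w|}: L_j = 0 whenever L̄_i = 0, and L_j ≤ |w| - 1 - (i|w| - j) + |w| L̄_i whenever L̄_i > 0. Define θ̄ = max{j ≤ 0 : L̄_i ≤ i - j for i = j, ..., n} and θ = max{k ≤ 0 : L_j ≤ j - k for j = k, ..., n|w|}. Then on the event θ̄ > -∞, θ ≥ |w|(θ̄ - 1) + 1. -/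
/-- Lemma `matador` in deterministic form: if the fine-scale lengths `(L_j)` are
controlled by the block-rescaled lengths `(L̄_i)` (blocks of size `|w|`), then the
fine-scale regeneration time `θ = max{k ≤ 0 : L_j ≤ j - k, j = k,…,n|w|}` satisfies
`θ ≥ |w|(θ̄ - 1) + 1` where `θ̄ = max{j ≤ 0 : L̄_i ≤ i - j, i = j,…,n}`, provided
`θ̄ > -∞` (i.e. the defining set is nonempty). -/
theorem stmt_9 (w : ℕ) (hw : 1 ≤ w) (n : ℕ) (L Lbar : ℤ → ℕ)
    (h0 : ∀ i j : ℤ, (i - 1) * w + 1 ≤ j → j ≤ i * w → Lbar i = 0 → L j = 0)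
    (h1 : ∀ i j : ℤ, (i - 1) * w + 1 ≤ j → j ≤ i * w → 0 < Lbar i →
      (L j : ℤ) ≤ (w : ℤ) - 1 - (i * w - j) + w * Lbar i)
    (hne : ∃ j : ℤ, j ≤ 0 ∧ ∀ i : ℤ, j ≤ i → i ≤ n → (Lbar i : ℤ) ≤ i - j) :
    (w : ℤ) *
        (sSup {j : ℤ | j ≤ 0 ∧ ∀ i : ℤ, j ≤ i → i ≤ n → (Lbar i : ℤ) ≤ i - j} - 1)
        + 1 ≤
      sSup {k : ℤ | k ≤ 0 ∧ ∀ j : ℤ, k ≤ j → j ≤ (n : ℤ) * w → (L j : ℤ) ≤ j - k} := by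
  have hwpos : (0 : ℤ) < (w : ℤ) := by exact_mod_cast hw
  set Sbar := {j : ℤ | j ≤ 0 ∧ ∀ i : ℤ, j ≤ i → i ≤ n → (Lbar i : ℤ) ≤ i - j} with hSbar
  set S := {k : ℤ | k ≤ 0 ∧ ∀ j : ℤ, k ≤ j → j ≤ (n : ℤ) * w → (L j : ℤ) ≤ j - k} with hS
  have hbdd : BddAbove Sbar := ⟨0, fun x hx => hx.1⟩
  have hmem : sSup Sbar ∈ Sbar := Int.csSup_mem hne hbdd
  set θ := sSup Sbar with hθ
  have hθ0 : θ ≤ 0 := hmem.1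
  have hθL : ∀ i : ℤ, θ ≤ i → i ≤ n → (Lbar i : ℤ) ≤ i - θ := hmem.2
  set k₀ : ℤ := (w : ℤ) * (θ - 1) + 1 with hk₀
  have hk₀0 : k₀ ≤ 0 := by nlinarith
  have hk₀mem : k₀ ∈ S := by
    refine ⟨hk₀0, fun j hj1 hj2 => ?_⟩
    set i : ℤ := (j + w - 1) / w with hi
    have hdvd := Int.mul_ediv_add_emod (j + w - 1) w
    have hmod0 : 0 ≤ (j + w - 1) % w := Int.emod_nonneg _ (by positivity)
    have hmodlt : (j + w - 1) % w < w := Int.emod_lt_of_pos _ hwpos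
    have hjle : j ≤ i * w := by
      have : (w : ℤ) * i = j + w - 1 - (j + w - 1) % w := by linarith
      nlinarith
    have hjge : (i - 1) * w + 1 ≤ j := by
      have : (w : ℤ) * i = j + w - 1 - (j + w - 1) % w := by linarith
      nlinarith
    have hiθ : θ ≤ i := by nlinarith
    have hin : i ≤ (n : ℤ) := by nlinarith
    have hL := hθL i hiθ hin
    rcases Nat.eq_zero_or_pos (Lbar i) with h | h
    · have := h0 i j hjge hjle h
      simp [this]; linarith
    · have := h1 i j hjge hjle h
      nlinarith
  exact le_csSup ⟨0, fun x hx => hx.1⟩ hk₀mem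
end
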